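/- arXiv:1706.02177 — 5 statements merged into one kernel-verified Lean document; each statement's English description precedes it below -/
import Mathlib

section
/- Suppose 1 ≤ i ≤ k and c, d are positive integers with c·a_i = d·a_k and c > d (such c, d exist for every i < k since a_i < a_k). Then B_{ik}^c = 0 and C_{ik}^c = 0. (This is the paper's Lemma 3.2: A_{i(2k-1)}^{c_i} = A_{i(2k)}^{c_i} = 0, obtained by comparing the coefficients of χ_{c·a_k} and χ_{-c·a_k} on both sides of α(χ_{a_i})^c = α(χ_{a_k})^d.) -/
/-- The character `χ_n : 𝕋 → ℂ`, `χ_n z = z ^ n`, as a continuous map on the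
circle group `𝕋 = {z ∈ ℂ : |z| = 1}`. -/
noncomputable def chi (n : ℤ) : C(Circle, ℂ) :=
  { toFun := fun z => ((z ^ n : Circle) : ℂ)
    continuous_toFun := by
      exact continuous_induced_dom.comp (continuous_zpow n) }

/-!
Since `α` is multiplicative, `α(χ_{a_i})^c = α(χ_{c a_i}) = α(χ_{d a_K}) = α(χ_{a_K})^d`.
Both sides are trigonometric polynomials with coefficients in `Q`, and such a polynomial
determines its coefficients: after applying a functional this is the linear independence of
the characters `z ↦ z ^ n`. So the identity holds between Laurent polynomials in `Q[ℤ]`.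
All frequencies lie in `[-a_K, a_K]`, so the coefficient at `c a_K` is `B_{iK}^c` on the
left, while the right-hand side has degree at most `d a_K < c a_K`. Substituting `z⁻¹` for `z`
swaps the roles of `B` and `C`.
-/

theorem chi_pow (n : ℤ) (m : ℕ) : chi n ^ m = chi (m * n) := by
  ext z
  simp [chi, ← zpow_natCast, ← zpow_mul, mul_comm]

namespace AddMonoidAlgebra

variable {R A : Type*} [Semiring R] [AddCommMonoid A] [PartialOrder A] [IsOrderedCancelAddMonoid A]

theorem le_nsmul_of_mem_support_pow {p : R[A]} {M : A} (hp : ∀ a ∈ p.coeff.support, a ≤ M)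
    (n : ℕ) : ∀ a ∈ (p ^ n).coeff.support, a ≤ n • M := by
  classical
  induction n with
  | zero =>
    intro a ha
    rw [pow_zero, one_def, coeff_single] at ha
    rw [zero_nsmul, Finset.mem_singleton.mp (Finsupp.support_single_subset ha)]
  | succ n ih =>
    intro a ha
    obtain ⟨b, hb, c, hc, rfl⟩ :=
      Finset.mem_add.mp (support_coeff_mul_subset _ _ (pow_succ p n ▸ ha))
    rw [succ_nsmul]
    exact add_le_add (ih b hb) (hp c hc)

theorem coeff_pow_nsmul_of_forall_le {p : R[A]} {M : A} (hp : ∀ a ∈ p.coeff.support, a ≤ M)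
    (n : ℕ) : (p ^ n).coeff (n • M) = p.coeff M ^ n := by
  induction n with
  | zero => simp [one_def]
  | succ n ih =>
    rw [pow_succ, succ_nsmul, pow_succ, ← ih]
    refine coeff_mul_add_of_uniqueAdd fun b c hb hc hbc => ?_
    exact (add_eq_add_iff_eq_and_eq (le_nsmul_of_mem_support_pow hp n b hb) (hp c hc)).mp hbc

theorem coeff_pow_eq_zero_of_not_le_nsmul {p : R[A]} {M : A} (hp : ∀ a ∈ p.coeff.support, a ≤ M)
    {n : ℕ} {x : A} (hx : ¬ x ≤ n • M) : (p ^ n).coeff x = 0 :=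
  Finsupp.notMem_support_iff.mp fun h => hx (le_nsmul_of_mem_support_pow hp n x h)

end AddMonoidAlgebra

open AddMonoidAlgebra

namespace Circle

theorem exists_zpow_ne_one {n : ℤ} (hn : n ≠ 0) : ∃ z : Circle, z ^ n ≠ 1 := by
  refine ⟨exp (Real.pi / n), fun h => ?_⟩
  have hpi : exp Real.pi = 1 := by
    rw [← h, ← exp_zsmul, zsmul_eq_mul, mul_div_cancel₀ _ (Int.cast_ne_zero.mpr hn)]
  have hpi' := congrArg ((↑) : Circle → ℂ) hpi
  rw [coe_exp, Complex.exp_pi_mul_I] at hpi'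
  norm_num at hpi'

theorem linearIndependent_zpow :
    LinearIndependent ℂ fun n : ℤ => fun z : Circle => ((z ^ n : Circle) : ℂ) := by
  refine (linearIndependent_monoidHom Circle ℂ).comp
    (fun n => coeHom.comp (zpowGroupHom n)) fun m n hmn => ?_
  by_contra hne
  obtain ⟨z, hz⟩ := exists_zpow_ne_one (sub_ne_zero.mpr hne)
  have hzmn : ((z ^ m : Circle) : ℂ) = ((z ^ n : Circle) : ℂ) := DFunLike.congr_fun hmn z
  exact hz (by rw [zpow_sub, mul_inv_eq_one]; exact coe_injective hzmn)

variable {Q : Type*}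

noncomputable def evalLaurent [Semiring Q] [Algebra ℂ Q] (z : Circle) :
    AddMonoidAlgebra Q ℤ →+* Q :=
  liftNCRingHom (RingHom.id Q)
    ((algebraMap ℂ Q : ℂ →* Q).comp (coeHom.comp (zpowersHom Circle z)))
    fun q _ => Algebra.commute_algebraMap_right _ q

theorem evalLaurent_single [Semiring Q] [Algebra ℂ Q] (z : Circle) (n : ℤ) (q : Q) :
    evalLaurent z (single n q) = ((z ^ n : Circle) : ℂ) • q := by
  refine (liftNCRingHom_single _ _ _ n q).trans ?_
  rw [Algebra.smul_def, Algebra.commutes]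
  rfl

theorem eq_zero_of_forall_evalLaurent_eq_zero [NormedRing Q] [NormedAlgebra ℂ Q]
    {p : AddMonoidAlgebra Q ℤ} (hp : ∀ z : Circle, evalLaurent z p = 0) : p = 0 := by
  ext n
  refine SeparatingDual.eq_zero_of_forall_dual_eq_zero (R := ℂ) fun φ => ?_
  by_cases hn : n ∈ p.coeff.support
  swap
  · rw [Finsupp.notMem_support_iff.mp hn, map_zero]
  refine linearIndependent_iff'.mp linearIndependent_zpow _ (fun m => φ (p.coeff m)) ?_ n hn
  funext z
  have hφ := congrArg φ (hp z)
  rw [← sum_coeff_single p, map_finsuppSum, map_finsuppSum] at hφ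
  simp only [evalLaurent_single, Finsupp.sum, map_smul] at hφ
  simpa [mul_comm] using hφ

end Circle

section TrigPoly

open AddMonoidAlgebra Circle

variable {Q ι : Type*} [Fintype ι] (a : ι → ℤ)

noncomputable def trigPoly [Semiring Q] (b c : ι → Q) : AddMonoidAlgebra Q ℤ :=
  ∑ j, single (a j) (b j) + ∑ j, single (-a j) (c j)

noncomputable def trigSum [Semiring Q] [Module ℂ Q] (b c : ι → Q) (z : Circle) : Q :=
  ∑ j, ((z ^ a j : Circle) : ℂ) • b j + ∑ j, ((z ^ (-a j) : Circle) : ℂ) • c j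

theorem trigSum_inv [Semiring Q] [Module ℂ Q] (b c : ι → Q) (z : Circle) :
    trigSum a b c z⁻¹ = trigSum a c b z := by
  simp only [trigSum, inv_zpow', neg_neg, add_comm]

theorem evalLaurent_trigPoly [Semiring Q] [Algebra ℂ Q] (b c : ι → Q) (z : Circle) :
    evalLaurent z (trigPoly a b c) = trigSum a b c z := by
  simp only [trigPoly, trigSum, map_add, map_sum, evalLaurent_single]

theorem trigPoly_coeff [Semiring Q] (b c : ι → Q) (n : ℤ) :
    (trigPoly a b c).coeff n =
      (∑ j, if a j = n then b j else 0) + ∑ j, if -a j = n then c j else 0 := by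
  classical
  simp only [trigPoly, coeff_add, coeff_sum, Finsupp.add_apply, Finsupp.finsetSum_apply,
    coeff_single, Finsupp.single_apply]

variable [Semiring Q] {a} (b c : ι → Q)

theorem trigPoly_support_le (ha : ∀ j, 0 < a j) {M : ℤ} (hM : ∀ j, a j ≤ M) :
    ∀ n ∈ (trigPoly a b c).coeff.support, n ≤ M := by
  intro n hn
  by_contra! hMn
  refine Finsupp.mem_support_iff.mp hn ?_
  rw [trigPoly_coeff, Finset.sum_eq_zero, Finset.sum_eq_zero, add_zero] <;>
    exact fun j _ => if_neg (by have := hM j; have := ha j; omega)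

theorem trigPoly_coeff_top (ha : ∀ j, 0 < a j) {K : ι} (hK : ∀ j ≠ K, a j < a K) :
    (trigPoly a b c).coeff (a K) = b K := by
  rw [trigPoly_coeff, Finset.sum_eq_single K (fun j _ hj => if_neg (hK j hj).ne) (by simp),
    if_pos rfl, Finset.sum_eq_zero fun j _ => if_neg (by have := ha j; have := ha K; omega),
    add_zero]

end TrigPoly

open AddMonoidAlgebra Circle in
theorem pow_eq_zero_of_trigSum_pow_eq {Q ι : Type*} [Fintype ι] [NormedRing Q] [NormedAlgebra ℂ Q]
    {a : ι → ℤ} (ha : ∀ j, 0 < a j) {K : ι} (hK : ∀ j ≠ K, a j < a K) {b c b' c' : ι → Q}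
    {m n : ℕ} (hnm : n < m) (h : ∀ z, trigSum a b c z ^ m = trigSum a b' c' z ^ n) :
    b K ^ m = 0 := by
  have haK : ∀ j, a j ≤ a K := fun j => by
    rcases eq_or_ne j K with rfl | hj
    exacts [le_rfl, (hK j hj).le]
  have hpow : trigPoly a b c ^ m = trigPoly a b' c' ^ n :=
    sub_eq_zero.mp <| eq_zero_of_forall_evalLaurent_eq_zero fun z => by
      rw [map_sub, map_pow, map_pow, evalLaurent_trigPoly, evalLaurent_trigPoly, h, sub_self]
  calc b K ^ m = (trigPoly a b c ^ m).coeff (m • a K) := by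
        rw [coeff_pow_nsmul_of_forall_le (trigPoly_support_le b c ha haK),
          trigPoly_coeff_top b c ha hK]
    _ = (trigPoly a b' c' ^ n).coeff (m • a K) := by rw [hpow]
    _ = 0 := coeff_pow_eq_zero_of_not_le_nsmul (trigPoly_support_le b' c' ha haK)
        (nsmul_lt_nsmul_left (ha K) hnm).not_ge

theorem stmt_0_general {k : ℕ} (a : Fin (k + 1) → ℤ)
    (ha_pos : ∀ i, 0 < a i) (ha_mono : StrictMono a)
    (Q : Type*) [NormedRing Q] [StarRing Q] [CStarRing Q]
    [NormedAlgebra ℂ Q]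
    (α : C(Circle, ℂ) →⋆ₐ[ℂ] C(Circle, Q))
    (B C : Fin (k + 1) → Fin (k + 1) → Q)
    (hα : ∀ i, ∀ z : Circle,
      α (chi (a i)) z
        = ∑ j, ((z ^ (a j) : Circle) : ℂ) • B i j
          + ∑ j, ((z ^ (-(a j)) : Circle) : ℂ) • C i j)
    (i : Fin (k + 1)) (c d : ℕ) (hdc : d < c)
    (hcd : (c : ℤ) * a i = (d : ℤ) * a (Fin.last k)) :
    B i (Fin.last k) ^ c = 0 ∧ C i (Fin.last k) ^ c = 0 := by
  have hK : ∀ j ≠ Fin.last k, a j < a (Fin.last k) := fun j hj =>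
    ha_mono (Fin.lt_last_iff_ne_last.mpr hj)
  have hα' : ∀ r z, α (chi (a r)) z = trigSum a (B r) (C r) z := hα
  have hpow : ∀ z, trigSum a (B i) (C i) z ^ c =
      trigSum a (B (Fin.last k)) (C (Fin.last k)) z ^ d := fun z => by
    rw [← hα', ← hα', ← ContinuousMap.pow_apply, ← ContinuousMap.pow_apply, ← map_pow, ← map_pow,
      chi_pow, chi_pow, hcd]
  have hpow_inv : ∀ z, trigSum a (C i) (B i) z ^ c =
      trigSum a (C (Fin.last k)) (B (Fin.last k)) z ^ d := fun z => by
    simpa only [trigSum_inv] using hpow z⁻¹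
  exact ⟨pow_eq_zero_of_trigSum_pow_eq ha_pos hK hdc hpow,
    pow_eq_zero_of_trigSum_pow_eq ha_pos hK hdc hpow_inv⟩

theorem stmt_0 {k : ℕ} (a : Fin (k + 1) → ℤ)
    (ha_pos : ∀ i, 0 < a i) (ha_mono : StrictMono a)
    (Q : Type*) [NormedRing Q] [StarRing Q] [CStarRing Q]
    [NormedAlgebra ℂ Q] [StarModule ℂ Q] [CompleteSpace Q]
    (α : C(Circle, ℂ) →⋆ₐ[ℂ] C(Circle, Q))
    (B C : Fin (k + 1) → Fin (k + 1) → Q)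
    (hα : ∀ i, ∀ z : Circle,
      α (chi (a i)) z
        = ∑ j, ((z ^ (a j) : Circle) : ℂ) • B i j
          + ∑ j, ((z ^ (-(a j)) : Circle) : ℂ) • C i j)
    (i : Fin (k + 1)) (c d : ℕ) (hc : 0 < c) (hd : 0 < d) (hdc : d < c)
    (hcd : (c : ℤ) * a i = (d : ℤ) * a (Fin.last k)) :
    B i (Fin.last k) ^ c = 0 ∧ C i (Fin.last k) ^ c = 0 :=
  stmt_0_general a ha_pos ha_mono Q α B C hα i c d hdc hcd
end

section
/- If p, q, l, m ∈ {1, …, k} satisfy a_p + a_q = -a_l + a_m, then B_{pk}·B_{qk} = star(C_{lk})·B_{mk}. (This is the pre-antipode form of the paper's Lemma 3.4, obtained by comparing the coefficient of χ_{2a_k} on both sides of α(χ_{a_p})·α(χ_{a_q}) = α(χ_{-a_l})·α(χ_{a_m}).) -/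
/-!
Applying the ⋆-homomorphism `α` to `χ_{a_p} χ_{a_q} = χ_{-a_l} χ_{a_m}` gives an identity between
products of two Laurent polynomials in `z` with coefficients in `Q`. Since `0 < a_1 < ⋯ < a_k`,
the largest exponent on either side is `2 a_k`, reached by exactly one pair of terms, so the
`2 a_k`-th Fourier coefficient (integral against `z^{-2 a_k}` for the Haar probability measure on
the circle) of each side is the product of the two leading coefficients.
-/

open MeasureTheory

noncomputable instance : MeasurableSpace Circle := borel Circle

instance : BorelSpace Circle := ⟨rfl⟩

noncomputable def circleHaar : Measure Circle := Measure.haarMeasure ⊤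

instance : IsProbabilityMeasure circleHaar :=
  ⟨Measure.haarMeasure_self (K₀ := ⊤)⟩

instance : circleHaar.IsMulLeftInvariant := by
  unfold circleHaar; infer_instance

lemma Circle.exists_coe_zpow_eq_neg_one {n : ℤ} (hn : n ≠ 0) :
    ∃ w : Circle, ((w ^ n : Circle) : ℂ) = -1 := by
  refine ⟨Circle.exp (Real.pi / n), ?_⟩
  rw [← Circle.exp_intCast_mul, mul_div_cancel₀ _ (Int.cast_ne_zero.mpr hn), Circle.coe_exp,
    Complex.exp_pi_mul_I]

lemma Circle.star_coe_zpow (z : Circle) (n : ℤ) :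
    star ((z ^ n : Circle) : ℂ) = ((z ^ (-n) : Circle) : ℂ) := by
  rw [zpow_neg, Circle.coe_inv_eq_conj]
  rfl

lemma integral_coe_zpow_circleHaar (n : ℤ) :
    ∫ z : Circle, ((z ^ n : Circle) : ℂ) ∂circleHaar = if n = 0 then 1 else 0 := by
  rcases eq_or_ne n 0 with rfl | hn
  · simp
  obtain ⟨w, hw⟩ := Circle.exists_coe_zpow_eq_neg_one hn
  rw [if_neg hn]
  refine integral_eq_zero_of_mul_left_eq_neg (g := w) fun z => ?_
  rw [mul_zpow, Circle.coe_mul, hw, neg_one_mul]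

section FourierCoeff

variable {Q : Type*} [NormedRing Q] [NormedAlgebra ℂ Q]

lemma sum_zpow_smul_mul_sum_zpow_smul {ι κ : Type*} (s : Finset ι) (t : Finset κ)
    (e : ι → ℤ) (f : κ → ℤ) (u : ι → Q) (v : κ → Q) (z : Circle) :
    (∑ i ∈ s, ((z ^ e i : Circle) : ℂ) • u i) * ∑ j ∈ t, ((z ^ f j : Circle) : ℂ) • v j
      = ∑ x ∈ s ×ˢ t, ((z ^ (e x.1 + f x.2) : Circle) : ℂ) • (u x.1 * v x.2) := by
  rw [Finset.sum_mul_sum, Finset.sum_product]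
  simp only [smul_mul_smul_comm, zpow_add, Circle.coe_mul]

variable [CompleteSpace Q]

noncomputable def circleFourierCoeff (f : Circle → Q) (n : ℤ) : Q :=
  ∫ z, ((z ^ (-n) : Circle) : ℂ) • f z ∂circleHaar

lemma circleFourierCoeff_sum_zpow_smul {ι : Type*} (s : Finset ι) (e : ι → ℤ) (u : ι → Q)
    (n : ℤ) [DecidablePred fun i => e i = n] :
    circleFourierCoeff (fun z => ∑ i ∈ s, ((z ^ e i : Circle) : ℂ) • u i) n
      = ∑ i ∈ s with e i = n, u i := by
  have hint : ∀ i, Integrable (fun z : Circle => ((z ^ (-n + e i) : Circle) : ℂ) • u i)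
      circleHaar := fun i =>
    ((chi _).continuous.smul continuous_const).integrable_of_hasCompactSupport
      (HasCompactSupport.of_compactSpace _)
  simp_rw [circleFourierCoeff, Finset.smul_sum, smul_smul, ← Circle.coe_mul, ← zpow_add]
  rw [integral_finsetSum s fun i _ => hint i, Finset.sum_filter]
  refine Finset.sum_congr rfl fun i _ => ?_
  rw [integral_smul_const, integral_coe_zpow_circleHaar]
  by_cases h : e i = n
  · simp [h]
  · simp [h, neg_add_eq_zero, Ne.symm h]

lemma circleFourierCoeff_mul_of_forall_lt {ι κ : Type*} [Fintype ι] [Fintype κ]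
    {e : ι → ℤ} {f : κ → ℤ} {i₀ : ι} {j₀ : κ}
    (he : ∀ i ≠ i₀, e i < e i₀) (hf : ∀ j ≠ j₀, f j < f j₀) (u : ι → Q) (v : κ → Q) :
    circleFourierCoeff (fun z => (∑ i, ((z ^ e i : Circle) : ℂ) • u i)
        * ∑ j, ((z ^ f j : Circle) : ℂ) • v j) (e i₀ + f j₀) = u i₀ * v j₀ := by
  classical
  have he' (i : ι) : e i ≤ e i₀ := by
    rcases eq_or_ne i i₀ with rfl | hi
    exacts [le_rfl, (he i hi).le]
  have hf' (j : κ) : f j ≤ f j₀ := by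
    rcases eq_or_ne j j₀ with rfl | hj
    exacts [le_rfl, (hf j hj).le]
  have htop : (Finset.univ ×ˢ Finset.univ).filter (fun x : ι × κ => e x.1 + f x.2 = e i₀ + f j₀)
      = {(i₀, j₀)} := by
    ext ⟨i, j⟩
    simp only [Finset.mem_filter, Finset.mem_product, Finset.mem_univ, true_and,
      Finset.mem_singleton, Prod.mk.injEq]
    refine ⟨fun h => ⟨?_, ?_⟩, fun ⟨hi, hj⟩ => hi ▸ hj ▸ rfl⟩ <;> by_contra hne
    · linarith [he i hne, hf' j]
    · linarith [hf j hne, he' i]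
  simp_rw [sum_zpow_smul_mul_sum_zpow_smul]
  rw [circleFourierCoeff_sum_zpow_smul, htop, Finset.sum_singleton]

end FourierCoeff

lemma chi_mul (s t : ℤ) : chi s * chi t = chi (s + t) := by
  ext z
  exact (congrArg Subtype.val (zpow_add z s t)).symm

lemma star_chi (s : ℤ) : star (chi s) = chi (-s) := by
  ext z
  exact Circle.star_coe_zpow z s

section TopExponent

variable {ι : Type*} {a : ι → ℤ} {i₀ : ι}

lemma Sum.elim_self_neg_lt_of_ne_inl (ha_pos : ∀ i, 0 < a i) (hmax : ∀ i ≠ i₀, a i < a i₀) :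
    ∀ x ≠ Sum.inl i₀, Sum.elim a (-a) x < a i₀
  | .inl i, hi => hmax i fun h => hi (h ▸ rfl)
  | .inr i, _ => by simp only [Sum.elim_inr, Pi.neg_apply]; linarith [ha_pos i, ha_pos i₀]

lemma Sum.elim_neg_self_lt_of_ne_inr (ha_pos : ∀ i, 0 < a i) (hmax : ∀ i ≠ i₀, a i < a i₀) :
    ∀ x ≠ Sum.inr i₀, Sum.elim (-a) a x < a i₀
  | .inl i, _ => by simp only [Sum.elim_inl, Pi.neg_apply]; linarith [ha_pos i, ha_pos i₀]
  | .inr i, hi => hmax i fun h => hi (h ▸ rfl)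

end TopExponent

theorem stmt_2 {k : ℕ} (a : Fin (k + 1) → ℤ)
    (ha_pos : ∀ i, 0 < a i) (ha_mono : StrictMono a)
    (Q : Type*) [NormedRing Q] [StarRing Q] [CStarRing Q]
    [NormedAlgebra ℂ Q] [StarModule ℂ Q] [CompleteSpace Q]
    (α : C(Circle, ℂ) →⋆ₐ[ℂ] C(Circle, Q))
    (B C : Fin (k + 1) → Fin (k + 1) → Q)
    (hα : ∀ i, ∀ z : Circle,
      α (chi (a i)) z
        = ∑ j, ((z ^ (a j) : Circle) : ℂ) • B i j
          + ∑ j, ((z ^ (-(a j)) : Circle) : ℂ) • C i j)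
    (p q l m : Fin (k + 1)) (h : a p + a q = -a l + a m) :
    B p (Fin.last k) * B q (Fin.last k) = star (C l (Fin.last k)) * B m (Fin.last k) := by
  set N := a (Fin.last k)
  have hmax : ∀ i ≠ Fin.last k, a i < N := fun i hi => ha_mono (Fin.lt_last_iff_ne_last.2 hi)
  have htop := Sum.elim_self_neg_lt_of_ne_inl ha_pos hmax
  have htop_star := Sum.elim_neg_self_lt_of_ne_inr ha_pos hmax
  have hlaurent (i : Fin (k + 1)) (z : Circle) : α (chi (a i)) z
      = ∑ x, ((z ^ Sum.elim a (-a) x : Circle) : ℂ) • Sum.elim (B i) (C i) x := by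
    simp only [hα, Fintype.sum_sum_type, Sum.elim_inl, Sum.elim_inr, Pi.neg_apply]
  have hlaurent_star (i : Fin (k + 1)) (z : Circle) : star (α (chi (a i)) z)
      = ∑ x, ((z ^ Sum.elim (-a) a x : Circle) : ℂ) • Sum.elim (star (B i)) (star (C i)) x := by
    simp only [hα, star_add, star_sum, star_smul, Circle.star_coe_zpow, neg_neg,
      Fintype.sum_sum_type, Sum.elim_inl, Sum.elim_inr, Pi.neg_apply, Pi.star_apply]
  have hprod (z : Circle) :
      α (chi (a p)) z * α (chi (a q)) z = star (α (chi (a l)) z) * α (chi (a m)) z := by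
    rw [← ContinuousMap.mul_apply, ← map_mul, chi_mul, h, ← chi_mul, map_mul, ← star_chi,
      map_star]
    rfl
  calc B p (Fin.last k) * B q (Fin.last k)
      = circleFourierCoeff (fun z => α (chi (a p)) z * α (chi (a q)) z) (N + N) := by
        simp only [hlaurent]
        exact (circleFourierCoeff_mul_of_forall_lt htop htop
          (Sum.elim (B p) (C p)) (Sum.elim (B q) (C q))).symm
    _ = circleFourierCoeff (fun z => star (α (chi (a l)) z) * α (chi (a m)) z) (N + N) := by
        simp only [hprod]
    _ = star (C l (Fin.last k)) * B m (Fin.last k) := by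
        simp_rw [hlaurent_star, hlaurent]
        exact circleFourierCoeff_mul_of_forall_lt htop_star htop _ _
end

section
/- For every i ∈ {1, …, k}, B_{ik}·star(C_{ik}) = 0 and C_{ik}·star(B_{ik}) = 0. (This is the pre-antipode form of the paper's Lemma 3.7: since χ_{a_i}·χ_{-a_i} = 1 and α is a unital homomorphism, α(χ_{a_i})·α(χ_{-a_i}) = 1, and comparing the coefficients of χ_{2a_k} and χ_{-2a_k} on both sides yields A_{i(2k-1)}·A_{i(2k)}^* = A_{i(2k)}·A_{i(2k-1)}^* = 0.) -/
lemma Circle.exists_zpow_ne_one_s5 {n : ℤ} (hn : n ≠ 0) : ∃ z : Circle, z ^ n ≠ 1 :=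
  ⟨Circle.exp (Real.pi / n), by
    rw [← Circle.exp_intCast_mul, mul_div_cancel₀ _ (Int.cast_ne_zero.2 hn)]
    exact Circle.exp_pi_ne_one⟩

lemma Circle.linearIndependent_coe_zpow :
    LinearIndependent ℂ fun (n : ℤ) (z : Circle) => ((z ^ n : Circle) : ℂ) := by
  refine (linearIndependent_monoidHom Circle ℂ).comp
    (fun n => Circle.coeHom.comp (zpowGroupHom n)) fun m n hmn => ?_
  by_contra hne
  obtain ⟨z, hz⟩ := Circle.exists_zpow_ne_one_s5 (sub_ne_zero.2 hne)
  have hzmn : ((z ^ m : Circle) : ℂ) = ((z ^ n : Circle) : ℂ) := DFunLike.congr_fun hmn z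
  exact hz (by rw [zpow_sub, Circle.coe_inj.1 hzmn, mul_inv_cancel])

lemma chi_mul_star_self (n : ℤ) : chi n * star (chi n) = 1 := by
  ext z
  change ((z ^ n : Circle) : ℂ) * star ((z ^ n : Circle) : ℂ) = 1
  rw [Complex.star_def, Complex.mul_conj, Circle.normSq_coe, Complex.ofReal_one]

section TrigonometricPolynomial

variable {ι : Type*} [Fintype ι]

theorem Circle.sum_filter_eq_zero_of_forall_sum_mul_eq_const (e : ι → ℤ) (c : ι → ℂ) (r : ℂ)
    (h : ∀ z : Circle, ∑ i, ((z ^ e i : Circle) : ℂ) * c i = r) {n : ℤ} (hn : n ≠ 0) :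
    ∑ i with e i = n, c i = 0 := by
  classical
  set l : ℤ →₀ ℂ := ∑ i, Finsupp.single (e i) (c i) - Finsupp.single 0 r
  have hl : l = 0 := by
    refine linearIndependent_iff.1 Circle.linearIndependent_coe_zpow l (funext fun z => ?_)
    simp [l, map_sub, map_sum, Finsupp.linearCombination_single, Finset.sum_apply, ← h z, mul_comm]
  simpa [l, Finsupp.finsetSum_apply, Finsupp.single_apply, hn.symm, Finset.sum_filter]
    using DFunLike.congr_fun hl n

theorem Circle.sum_filter_eq_zero_of_forall_sum_smul_eq_const {E : Type*} [NormedAddCommGroup E]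
    [NormedSpace ℂ E] (e : ι → ℤ) (v : ι → E) (r : E)
    (h : ∀ z : Circle, ∑ i, ((z ^ e i : Circle) : ℂ) • v i = r) {n : ℤ} (hn : n ≠ 0) :
    ∑ i with e i = n, v i = 0 := by
  refine SeparatingDual.eq_zero_of_forall_dual_eq_zero (R := ℂ) fun φ => ?_
  rw [map_sum]
  refine Circle.sum_filter_eq_zero_of_forall_sum_mul_eq_const e (φ ∘ v) (φ r) (fun z => ?_) hn
  simp [← h z, map_sum]

theorem Circle.sum_smul_mul_star_sum_smul {Q : Type*} [Ring Q] [StarRing Q] [Algebra ℂ Q]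
    [StarModule ℂ Q] (e : ι → ℤ) (v : ι → Q) (z : Circle) :
    (∑ s, ((z ^ e s : Circle) : ℂ) • v s) * star (∑ s, ((z ^ e s : Circle) : ℂ) • v s)
      = ∑ p : ι × ι, ((z ^ (e p.1 - e p.2) : Circle) : ℂ) • (v p.1 * star (v p.2)) := by
  have hstar : ∀ n : ℤ, star ((z ^ n : Circle) : ℂ) = ((z ^ (-n) : Circle) : ℂ) := fun n => by
    rw [zpow_neg, Circle.coe_inv_eq_conj, Complex.star_def]
  simp only [star_sum, star_smul, hstar, Finset.sum_mul_sum, smul_mul_smul_comm,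
    ← Circle.coe_mul, ← zpow_add, ← sub_eq_add_neg, Fintype.sum_prod_type]

section StarAlgebra

variable {Q : Type*} [NormedRing Q] [StarRing Q] [NormedAlgebra ℂ Q] [StarModule ℂ Q]

theorem Circle.mul_star_eq_zero_of_sub_eq_sub_unique (e : ι → ℤ) (v : ι → Q) (r : Q)
    (h : ∀ z : Circle,
      (∑ s, ((z ^ e s : Circle) : ℂ) • v s) * star (∑ s, ((z ^ e s : Circle) : ℂ) • v s) = r)
    {s₀ t₀ : ι} (hne : e s₀ ≠ e t₀)
    (huniq : ∀ s t, e s - e t = e s₀ - e t₀ → s = s₀ ∧ t = t₀) :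
    v s₀ * star (v t₀) = 0 := by
  classical
  have hcoeff := Circle.sum_filter_eq_zero_of_forall_sum_smul_eq_const
    (fun p : ι × ι => e p.1 - e p.2) (fun p => v p.1 * star (v p.2)) r
    (fun z => (Circle.sum_smul_mul_star_sum_smul e v z).symm.trans (h z)) (sub_ne_zero.2 hne)
  have hfilter : ({p | e p.1 - e p.2 = e s₀ - e t₀} : Finset (ι × ι)) = {(s₀, t₀)} := by
    ext ⟨s, t⟩
    simp only [Finset.mem_filter, Finset.mem_univ, true_and, Finset.mem_singleton, Prod.mk.injEq]
    exact ⟨huniq s t, by rintro ⟨rfl, rfl⟩; rfl⟩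
  rwa [hfilter, Finset.sum_singleton] at hcoeff

theorem Circle.mul_star_eq_zero_of_strictMax_of_strictMin (e : ι → ℤ) (v : ι → Q) (r : Q)
    (h : ∀ z : Circle,
      (∑ s, ((z ^ e s : Circle) : ℂ) • v s) * star (∑ s, ((z ^ e s : Circle) : ℂ) • v s) = r)
    {s₀ t₀ : ι} (hmax : ∀ s, s ≠ s₀ → e s < e s₀) (hmin : ∀ t, t ≠ t₀ → e t₀ < e t)
    (hne : s₀ ≠ t₀) :
    v s₀ * star (v t₀) = 0 ∧ v t₀ * star (v s₀) = 0 := by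
  have hlt : e t₀ < e s₀ := hmax t₀ hne.symm
  have hle_max : ∀ s, e s ≤ e s₀ := fun s => by
    rcases eq_or_ne s s₀ with rfl | hs
    exacts [le_rfl, (hmax s hs).le]
  have hge_min : ∀ t, e t₀ ≤ e t := fun t => by
    rcases eq_or_ne t t₀ with rfl | ht
    exacts [le_rfl, (hmin t ht).le]
  have huniq : ∀ s t, e s - e t = e s₀ - e t₀ → s = s₀ ∧ t = t₀ := fun s t hst => by
    by_contra hc
    rcases not_and_or.1 hc with hs | ht
    · linarith [hmax s hs, hge_min t]
    · linarith [hmin t ht, hle_max s]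
  refine ⟨Circle.mul_star_eq_zero_of_sub_eq_sub_unique e v r h hlt.ne' huniq,
    Circle.mul_star_eq_zero_of_sub_eq_sub_unique e v r h hlt.ne fun s t hst => ?_⟩
  exact (huniq t s (by linarith)).symm

end StarAlgebra

end TrigonometricPolynomial

theorem stmt_5_general {k : ℕ} (a : Fin (k + 1) → ℤ)
    (ha_pos : ∀ i, 0 < a i) (ha_mono : StrictMono a)
    (Q : Type*) [NormedRing Q] [StarRing Q] [CStarRing Q]
    [NormedAlgebra ℂ Q] [StarModule ℂ Q]
    (α : C(Circle, ℂ) →⋆ₐ[ℂ] C(Circle, Q))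
    (B C : Fin (k + 1) → Fin (k + 1) → Q)
    (hα : ∀ i, ∀ z : Circle,
      α (chi (a i)) z
        = ∑ j, ((z ^ (a j) : Circle) : ℂ) • B i j
          + ∑ j, ((z ^ (-(a j)) : Circle) : ℂ) • C i j)
    (i : Fin (k + 1)) :
    B i (Fin.last k) * star (C i (Fin.last k)) = 0 ∧
      C i (Fin.last k) * star (B i (Fin.last k)) = 0 := by
  have h : α (chi (a i)) * star (α (chi (a i))) = 1 := by
    rw [← map_star, ← map_mul, chi_mul_star_self, map_one]
  have hf : ∀ z : Circle, α (chi (a i)) z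
      = ∑ s, ((z ^ Sum.elim a (-a) s : Circle) : ℂ) • Sum.elim (B i) (C i) s := fun z => by
    simp [hα, Fintype.sum_sum_type]
  have hlast : ∀ j, j ≠ Fin.last k → a j < a (Fin.last k) :=
    fun j hj => ha_mono (Fin.lt_last_iff_ne_last.2 hj)
  refine Circle.mul_star_eq_zero_of_strictMax_of_strictMin (Sum.elim a (-a))
    (Sum.elim (B i) (C i)) 1 (fun z => by simpa [hf] using DFunLike.congr_fun h z)
    (s₀ := .inl (Fin.last k)) (t₀ := .inr (Fin.last k)) ?_ ?_ Sum.inl_ne_inr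
  · rintro (j | j) hj
    · exact hlast j (by simpa using hj)
    · simp only [Sum.elim_inr, Sum.elim_inl, Pi.neg_apply]
      linarith [ha_pos j, ha_pos (Fin.last k)]
  · rintro (j | j) hj
    · simp only [Sum.elim_inl, Sum.elim_inr, Pi.neg_apply]
      linarith [ha_pos j, ha_pos (Fin.last k)]
    · simpa using hlast j (by simpa using hj)

theorem stmt_5 {k : ℕ} (a : Fin (k + 1) → ℤ)
    (ha_pos : ∀ i, 0 < a i) (ha_mono : StrictMono a)
    (Q : Type*) [NormedRing Q] [StarRing Q] [CStarRing Q]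
    [NormedAlgebra ℂ Q] [StarModule ℂ Q] [CompleteSpace Q]
    (α : C(Circle, ℂ) →⋆ₐ[ℂ] C(Circle, Q))
    (B C : Fin (k + 1) → Fin (k + 1) → Q)
    (hα : ∀ i, ∀ z : Circle,
      α (chi (a i)) z
        = ∑ j, ((z ^ (a j) : Circle) : ℂ) • B i j
          + ∑ j, ((z ^ (-(a j)) : Circle) : ℂ) • C i j)
    (i : Fin (k + 1)) :
    B i (Fin.last k) * star (C i (Fin.last k)) = 0 ∧
      C i (Fin.last k) * star (B i (Fin.last k)) = 0 :=
  stmt_5_general a ha_pos ha_mono Q α B C hα i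
end

section
/- Let Q be a unital ⋆-ring and let A_1, …, A_m ∈ Q satisfy ∑_{i=1}^m A_i·A_i* = 1, ∑_{i=1}^m A_i*·A_i = 1, and A_i·A_j = 0 whenever i ≠ j. Then for every i, A_i^2·A_i* = A_i and A_i*·A_i^2 = A_i, and consequently each A_i is normal: A_i·A_i* = A_i*·A_i. (This is the paper's Lemma 3.9, where the two sum conditions come from the unitarity of the rows of the fundamental unitary and the vanishing products come from Lemma 3.8.) -/
/-! Multiplying `∑ j, A j * star (A j) = 1` on the left by `A i` kills every term but the `i`-th,
so `A i ^ 2 * star (A i) = A i`; symmetrically `star (A i) * A i ^ 2 = A i`. Sandwiching then gives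
`A i * star (A i) = star (A i) * A i ^ 2 * star (A i) = star (A i) * A i`. -/

section

variable {R ι : Type*} [Semiring R] [Fintype ι] {a b : ι → R} {i : ι}

theorem sq_mul_eq_self_of_sum_mul_eq_one (hab : ∑ j, a j * b j = 1)
    (horth : ∀ j, j ≠ i → a i * a j = 0) : a i ^ 2 * b i = a i :=
  calc a i ^ 2 * b i = ∑ j, a i * (a j * b j) := by
        rw [Finset.sum_eq_single_of_mem i (Finset.mem_univ i) fun j _ hj => by
          rw [← mul_assoc, horth j hj, zero_mul], sq, mul_assoc]
    _ = a i := by rw [← Finset.mul_sum, hab, mul_one]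

theorem mul_sq_eq_self_of_sum_mul_eq_one (hba : ∑ j, b j * a j = 1)
    (horth : ∀ j, j ≠ i → a j * a i = 0) : b i * a i ^ 2 = a i :=
  calc b i * a i ^ 2 = ∑ j, b j * a j * a i := by
        rw [Finset.sum_eq_single_of_mem i (Finset.mem_univ i) fun j _ hj => by
          rw [mul_assoc, horth j hj, mul_zero], sq, mul_assoc]
    _ = a i := by rw [← Finset.sum_mul, hba, one_mul]

end

theorem mul_comm_of_sq_mul_eq_self_of_mul_sq_eq_self {M : Type*} [Monoid M] {a b : M}
    (h₁ : a ^ 2 * b = a) (h₂ : b * a ^ 2 = a) : a * b = b * a :=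
  calc a * b = b * (a ^ 2 * b) := by rw [← mul_assoc, h₂]
    _ = b * a := by rw [h₁]

theorem stmt_7 (Q : Type*) [Ring Q] [StarRing Q] (m : ℕ) (A : Fin m → Q)
    (h1 : ∑ i, A i * star (A i) = 1)
    (h2 : ∑ i, star (A i) * A i = 1)
    (h3 : ∀ i j, i ≠ j → A i * A j = 0) :
    ∀ i, A i ^ 2 * star (A i) = A i ∧ star (A i) * A i ^ 2 = A i ∧
      A i * star (A i) = star (A i) * A i := by
  intro i
  have hleft : A i ^ 2 * star (A i) = A i :=
    sq_mul_eq_self_of_sum_mul_eq_one (b := fun j => star (A j)) h1 fun j hj => h3 i j hj.symm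
  have hright : star (A i) * A i ^ 2 = A i :=
    mul_sq_eq_self_of_sum_mul_eq_one (b := fun j => star (A j)) h2 fun j hj => h3 j i hj
  exact ⟨hleft, hright, mul_comm_of_sq_mul_eq_self_of_mul_sq_eq_self hleft hright⟩
end

section
/- Let Q be a unital C*-algebra over ℂ and let α : C(𝕋², ℂ) → C(𝕋², Q) be a unital ⋆-algebra homomorphism such that there exist A, B, C, D, E, F, Z_{(1,0)}, Z_{(-1,0)}, O, P, Z_{(2,0)}, Z_{(-2,0)} ∈ Q with α(χ_{(1,0)}) equal to the function w ↦ χ_{(1,0)}(w)·A + χ_{(-1,0)}(w)·B + χ_{(0,1)}(w)·C + χ_{(0,-1)}(w)·D + χ_{(2,0)}(w)·E + χ_{(-2,0)}(w)·F, and α(χ_{(2,0)}) equal to the function w ↦ χ_{(1,0)}(w)·Z_{(1,0)} + χ_{(-1,0)}(w)·Z_{(-1,0)} + χ_{(0,1)}(w)·O + χ_{(0,-1)}(w)·P + χ_{(2,0)}(w)·Z_{(2,0)} + χ_{(-2,0)}(w)·Z_{(-2,0)}. Then O = 0, P = 0, and C² = D² = E² = F² = 0. (This is the coefficient-comparison step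 in the proof of Theorem 3.4: since α(χ_{(2,0)}) = α(χ_{(1,0)})², comparing the coefficients of χ_{(0,1)}, χ_{(0,-1)}, χ_{(0,2)}, χ_{(0,-2)}, χ_{(4,0)} and χ_{(-4,0)} on both sides yields these relations; here S'' = {±(1,0), ±(0,1), ±(2,0)} is the generating set of ℤ×ℤ.) -/
/-!
Because `α` is multiplicative and `χ_{(2,0)} = χ_{(1,0)}²`, the two given expansions are
trigonometric polynomials `q` and `p` with coefficients in `Q` such that `q = p²` pointwise on `𝕋²`.
Distinct characters of `𝕋²` are linearly independent (Dedekind), and testing against linear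
functionals on `Q` shows that a `Q`-valued trigonometric polynomial is determined by its values.
Hence `q = p * p` in the group algebra `Q[ℤ × ℤ]`. No two frequencies of `p` add up to `(0, ±1)`,
while `(0, ±2)` and `(±4, 0)` arise only as twice `(0, ±1)` and `(±2, 0)`, so comparing these
coefficients gives the claim.
-/

open AddMonoidAlgebra

/-- The character `χ_{(m,n)} : 𝕋² → ℂ`, `χ_{(m,n)} (z, w) = z ^ m * w ^ n`, as a
continuous map on the 2-torus `𝕋² = 𝕋 × 𝕋`, where `𝕋 = {z ∈ ℂ : |z| = 1}`. -/
noncomputable def chi2 (m n : ℤ) : C(Circle × Circle, ℂ) :=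
  { toFun := fun w => ((w.1 ^ m : Circle) : ℂ) * ((w.2 ^ n : Circle) : ℂ)
    continuous_toFun := by
      exact ((continuous_subtype_val.comp
          ((continuous_zpow (G := Circle) m).comp continuous_fst)).mul
        (continuous_subtype_val.comp ((continuous_zpow (G := Circle) n).comp continuous_snd))) }

theorem LinearIndependent.eq_zero_of_forall_sum_smul_eq_zero {ι K X V : Type*} [Field K]
    [AddCommGroup V] [Module K V] {f : ι → X → K} (hf : LinearIndependent K f) {s : Finset ι}
    {c : ι → V} (h : ∀ x, ∑ i ∈ s, f i x • c i = 0) : ∀ i ∈ s, c i = 0 := by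
  intro i hi
  rw [← Module.forall_dual_apply_eq_zero_iff K]
  intro φ
  refine linearIndependent_iff'.mp hf s (fun j => φ (c j)) ?_ i hi
  funext x
  simpa [Finset.sum_apply, mul_comm] using congrArg φ (h x)

section FourierEval

variable {K G M Q : Type*} [Field K] [MulOneClass G] [AddMonoid M] [Ring Q] [Algebra K Q]

noncomputable def fourierEval (χ : Multiplicative M →* (G →* K)) (g : G) : Q[M] →+* Q :=
  liftNCRingHom (RingHom.id Q) ((algebraMap K Q).toMonoidHom.comp ((MonoidHom.eval g).comp χ))
    fun _ _ => Algebra.commute_algebraMap_right _ _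

variable (χ : Multiplicative M →* (G →* K)) (g : G)

@[simp]
theorem fourierEval_single (k : M) (a : Q) :
    fourierEval χ g (single k a) = χ (.ofAdd k) g • a := by
  simp [fourierEval, Algebra.smul_def, Algebra.commutes]

theorem fourierEval_apply (p : Q[M]) :
    fourierEval χ g p = ∑ k ∈ p.coeff.support, χ (.ofAdd k) g • p.coeff k := by
  conv_lhs => rw [← sum_coeff_single p]
  simp [Finsupp.sum, map_sum]

variable {χ}

theorem eq_of_forall_fourierEval_eq (hχ : Function.Injective χ) {p p' : Q[M]}
    (h : ∀ g, fourierEval χ g p = fourierEval χ g p') : p = p' := by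
  rw [← sub_eq_zero]
  set r := p - p'
  have hr (g : G) : ∑ k ∈ r.coeff.support, χ (.ofAdd k) g • r.coeff k = 0 := by
    rw [← fourierEval_apply, map_sub, h, sub_self]
  have hli : LinearIndependent K fun k : M => ⇑(χ (.ofAdd k)) :=
    (linearIndependent_monoidHom G K).comp _ (hχ.comp Multiplicative.ofAdd.injective)
  ext k
  by_contra hk
  exact hk (hli.eq_zero_of_forall_sum_smul_eq_zero hr k (Finsupp.mem_support_iff.2 hk))

end FourierEval

theorem Circle.eq_of_forall_zpow_eq {m n : ℤ} (h : ∀ z : Circle, z ^ m = z ^ n) : m = n := by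
  by_contra hmn
  have hd : (m - n : ℝ) ≠ 0 := sub_ne_zero.2 (by exact_mod_cast hmn)
  set t := Real.pi / (m - n)
  apply Circle.exp_pi_ne_one
  calc Circle.exp Real.pi = Circle.exp (m * t - n * t) := by rw [← sub_mul, mul_div_cancel₀ _ hd]
    _ = 1 := by rw [Circle.exp_sub, Circle.exp_intCast_mul, Circle.exp_intCast_mul, h, div_self']

noncomputable def torusChar : Multiplicative (ℤ × ℤ) →* (Circle × Circle →* ℂ) where
  toFun k :=
    { toFun w := ((w.1 ^ k.toAdd.1 : Circle) : ℂ) * ((w.2 ^ k.toAdd.2 : Circle) : ℂ)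
      map_one' := by simp
      map_mul' w w' := by simp only [Prod.fst_mul, Prod.snd_mul, mul_zpow, Circle.coe_mul]; ring }
  map_one' := by ext; simp
  map_mul' k l := by
    ext w
    simp only [MonoidHom.coe_mk, OneHom.coe_mk, MonoidHom.mul_apply, toAdd_mul, Prod.fst_add,
      Prod.snd_add, zpow_add, Circle.coe_mul]
    ring

theorem torusChar_ofAdd_apply (m n : ℤ) (w : Circle × Circle) :
    torusChar (.ofAdd (m, n)) w = chi2 m n w :=
  rfl

theorem chi2_add (m n m' n' : ℤ) : chi2 (m + m') (n + n') = chi2 m n * chi2 m' n' := by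
  ext w
  simp only [ContinuousMap.mul_apply, ← torusChar_ofAdd_apply, ← MonoidHom.mul_apply, ← map_mul]
  rfl

theorem torusChar_injective : Function.Injective torusChar := by
  intro k l h
  have h₁ (z : Circle) := congr($h (z, 1))
  have h₂ (z : Circle) := congr($h (1, z))
  simp only [torusChar, MonoidHom.coe_mk, OneHom.coe_mk, one_zpow, Circle.coe_one, mul_one,
    one_mul] at h₁ h₂
  exact Multiplicative.toAdd.injective <| Prod.ext
    (Circle.eq_of_forall_zpow_eq fun z => Circle.ext (h₁ z))
    (Circle.eq_of_forall_zpow_eq fun z => Circle.ext (h₂ z))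

theorem stmt_15_general (Q : Type*) [NormedRing Q] [StarRing Q] [CStarRing Q]
    [NormedAlgebra ℂ Q]
    (α : C(Circle × Circle, ℂ) →⋆ₐ[ℂ] C(Circle × Circle, Q))
    (A B C D E F Z₁₀ Zₘ₁₀ O P Z₂₀ Zₘ₂₀ : Q)
    (hα₁ : ∀ w : Circle × Circle,
      α (chi2 1 0) w
        = chi2 1 0 w • A + chi2 (-1) 0 w • B + chi2 0 1 w • C + chi2 0 (-1) w • D
          + chi2 2 0 w • E + chi2 (-2) 0 w • F)
    (hα₂ : ∀ w : Circle × Circle,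
      α (chi2 2 0) w
        = chi2 1 0 w • Z₁₀ + chi2 (-1) 0 w • Zₘ₁₀ + chi2 0 1 w • O + chi2 0 (-1) w • P
          + chi2 2 0 w • Z₂₀ + chi2 (-2) 0 w • Zₘ₂₀) :
    O = 0 ∧ P = 0 ∧ C ^ 2 = 0 ∧ D ^ 2 = 0 ∧ E ^ 2 = 0 ∧ F ^ 2 = 0 := by
  let p : Q[ℤ × ℤ] := single (1, 0) A + single (-1, 0) B + single (0, 1) C + single (0, -1) D
    + single (2, 0) E + single (-2, 0) F
  let q : Q[ℤ × ℤ] := single (1, 0) Z₁₀ + single (-1, 0) Zₘ₁₀ + single (0, 1) O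
    + single (0, -1) P + single (2, 0) Z₂₀ + single (-2, 0) Zₘ₂₀
  have hsq : q = p * p := by
    refine eq_of_forall_fourierEval_eq torusChar_injective fun w => ?_
    have h₂₀ : chi2 2 0 = chi2 1 0 * chi2 1 0 := by rw [← chi2_add]; norm_num
    have hw := congr(α $h₂₀ w)
    simp only [map_mul, ContinuousMap.mul_apply, hα₁, hα₂] at hw
    simpa [p, q, torusChar_ofAdd_apply] using hw
  have hcoeff (k : ℤ × ℤ) : q.coeff k = (p * p).coeff k := congr(($hsq).coeff k)
  simp only [p, q, add_mul, mul_add, single_mul_single, coeff_add, coeff_single,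
    Finsupp.add_apply] at hcoeff
  refine ⟨?_, ?_, ?_, ?_, ?_, ?_⟩
  · simpa using hcoeff (0, 1)
  · simpa using hcoeff (0, -1)
  · simpa [sq, eq_comm] using hcoeff (0, 2)
  · simpa [sq, eq_comm] using hcoeff (0, -2)
  · simpa [sq, eq_comm] using hcoeff (4, 0)
  · simpa [sq, eq_comm] using hcoeff (-4, 0)

theorem stmt_15 (Q : Type*) [NormedRing Q] [StarRing Q] [CStarRing Q]
    [NormedAlgebra ℂ Q] [StarModule ℂ Q] [CompleteSpace Q]
    (α : C(Circle × Circle, ℂ) →⋆ₐ[ℂ] C(Circle × Circle, Q))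
    (A B C D E F Z₁₀ Zₘ₁₀ O P Z₂₀ Zₘ₂₀ : Q)
    (hα₁ : ∀ w : Circle × Circle,
      α (chi2 1 0) w
        = chi2 1 0 w • A + chi2 (-1) 0 w • B + chi2 0 1 w • C + chi2 0 (-1) w • D
          + chi2 2 0 w • E + chi2 (-2) 0 w • F)
    (hα₂ : ∀ w : Circle × Circle,
      α (chi2 2 0) w
        = chi2 1 0 w • Z₁₀ + chi2 (-1) 0 w • Zₘ₁₀ + chi2 0 1 w • O + chi2 0 (-1) w • P
          + chi2 2 0 w • Z₂₀ + chi2 (-2) 0 w • Zₘ₂₀) :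
    O = 0 ∧ P = 0 ∧ C ^ 2 = 0 ∧ D ^ 2 = 0 ∧ E ^ 2 = 0 ∧ F ^ 2 = 0 :=
  stmt_15_general Q α A B C D E F Z₁₀ Zₘ₁₀ O P Z₂₀ Zₘ₂₀ hα₁ hα₂
end
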